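/- arXiv:2109.05899 — 4 statements merged into one kernel-verified Lean document; each statement's English description precedes it below -/
import Mathlib

section
/- The average reward μ(u) = Σ_m φ_m Σ_{l} θ_{u_l m} ∏_{i<l}(1 − θ_{u_i m}) of a list u is invariant under permutations of the list: for any permutation σ of {1,…,L}, μ(u ∘ σ) = μ(u). -/
/-!
Under the cascade model the probability of at least one click telescopes to
`1 - ∏ l, (1 - θ (u l) m)`, the complement of "no item is clicked", and this product does
not depend on the order of the list.
-/

open Finset

theorem sum_mul_prod_Iio_one_sub {ι R : Type*} [Fintype ι] [LinearOrder ι]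
    [LocallyFiniteOrderBot ι] [CommRing R] (f : ι → R) :
    ∑ l, f l * ∏ i ∈ Iio l, (1 - f i) = 1 - ∏ i, (1 - f i) := by
  rw [prod_one_sub_ordered, sub_sub_cancel]
  simp only [filter_gt_eq_Iio]

/-- the average reward of a list is invariant under permutations. -/
theorem cascade_reward_perm_invariant {M ι : Type*} [Fintype M] {L : ℕ}
    (φ : M → ℝ) (θ : ι → M → ℝ) (u : Fin L → ι) (σ : Equiv.Perm (Fin L)) :
    (∑ m, φ m * ∑ l, θ ((u ∘ σ) l) m * ∏ i ∈ Finset.Iio l, (1 - θ ((u ∘ σ) i) m))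
      = ∑ m, φ m * ∑ l, θ (u l) m * ∏ i ∈ Finset.Iio l, (1 - θ (u i) m) := by
  refine sum_congr rfl fun m _ => ?_
  rw [sum_mul_prod_Iio_one_sub, sum_mul_prod_Iio_one_sub]
  exact congrArg (fun p => φ m * (1 - p)) (Equiv.prod_comp σ fun i => 1 - θ (u i) m)
end

section
/- Under the topic-structure assumption, the greedy procedure that starts from the singleton maximizing Σ_m φ_m θ_{km} = φ_{h(k)} θ_{k,h(k)} and at each step appends the item maximizing the success rate at the new last slot, produces after l steps a list u^[l] satisfying μ(u^[l]) = max over all lists u of length l of μ(u). In particular, u^[L] is an optimal list of length L. -/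
open Finset

namespace GreedyAux

variable {M ι : Type*} [Fintype M] [Fintype ι] [DecidableEq ι]

/-- The expected reward as a function of the *set* of items shown. -/
noncomputable def fval (φ : M → ℝ) (θ : ι → M → ℝ) (T : Finset ι) : ℝ :=
  ∑ m, φ m * (1 - ∏ k ∈ T, (1 - θ k m))

lemma telescope (n : ℕ) (a : ℕ → ℝ) :
    ∑ i ∈ range n, a i * ∏ s ∈ range i, (1 - a s)
      = 1 - ∏ i ∈ range n, (1 - a i) := by
  induction n with
  | zero => simp
  | succ n ih => rw [sum_range_succ, prod_range_succ, ih]; ring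

lemma prod_anti {S A : Finset ι} (hSA : S ⊆ A) (g : ι → ℝ)
    (h0 : ∀ i, 0 ≤ g i) (h1 : ∀ i, g i ≤ 1) :
    ∏ i ∈ A, g i ≤ ∏ i ∈ S, g i := by
  rw [← prod_sdiff hSA]
  exact mul_le_of_le_one_left (prod_nonneg fun i _ => h0 i)
    (prod_le_one (fun i _ => h0 i) (fun i _ => h1 i))

lemma fval_insert (φ : M → ℝ) (θ : ι → M → ℝ) {A : Finset ι} {k : ι} (hk : k ∉ A) :
    fval φ θ (insert k A)
      = fval φ θ A + ∑ m, φ m * (θ k m * ∏ s ∈ A, (1 - θ s m)) := by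
  unfold fval
  rw [← sum_add_distrib]
  refine Finset.sum_congr rfl fun m _ => ?_
  rw [prod_insert hk]; ring

lemma delta_single (φ : M → ℝ) (θ : ι → M → ℝ) (h : ι → M)
    (hθtopic : ∀ a m, m ≠ h a → θ a m = 0) (k : ι) (B : Finset ι) :
    (∑ m, φ m * (θ k m * ∏ s ∈ B, (1 - θ s m)))
      = φ (h k) * (θ k (h k) * ∏ s ∈ B, (1 - θ s (h k))) :=
  Fintype.sum_eq_single (h k) fun m hm => by rw [hθtopic k m hm]; ring

lemma main (φ : M → ℝ) (θ : ι → M → ℝ) (h : ι → M)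
    (hθtopic : ∀ a m, m ≠ h a → θ a m = 0)
    (hφ : ∀ m, 0 ≤ φ m) (hθ0 : ∀ a m, 0 ≤ θ a m) (hθ1 : ∀ a m, θ a m ≤ 1)
    (L : ℕ) (u : ℕ → ι) (hinj : Set.InjOn u (Set.Iio L))
    (hstep : ∀ l, l + 1 ≤ L → ∀ k : ι, (∀ i < l, u i ≠ k) →
      (∑ m, φ m * (θ k m * ∏ s ∈ range l, (1 - θ (u s) m)))
        ≤ ∑ m, φ m * (θ (u l) m * ∏ s ∈ range l, (1 - θ (u s) m))) :
    ∀ d j, j + d ≤ L → ∀ T : Finset ι, T.card = j + d → (range j).image u ⊆ T →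
      fval φ θ T ≤ fval φ θ ((range (j + d)).image u) := by
  have hinjOn : ∀ n, n ≤ L → Set.InjOn u ↑(range n) := by
    intro n hn x hx y hy hxy
    simp only [coe_range, Set.mem_Iio] at hx hy
    exact hinj (show x ∈ Set.Iio L from lt_of_lt_of_le hx hn)
      (show y ∈ Set.Iio L from lt_of_lt_of_le hy hn) hxy
  have hinjF : ∀ n, n ≤ L → ∀ x ∈ range n, ∀ y ∈ range n, u x = u y → x = y := by
    intro n hn x hx y hy hxy
    exact hinjOn n hn (mem_coe.mpr hx) (mem_coe.mpr hy) hxy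
  intro d
  induction d with
  | zero =>
    intro j hjL T hcard hsub
    have hS : ((range j).image u).card = j := by
      rw [card_image_of_injOn (hinjOn j (by omega)), card_range]
    have hTeq : (range j).image u = T :=
      Finset.eq_of_subset_of_card_le hsub (by omega)
    rw [show j + 0 = j from rfl, hTeq]
  | succ d ih =>
    intro j hjL T hcard hsub
    have hjL' : j + 1 ≤ L := by omega
    have hScard : ((range j).image u).card = j := by
      rw [card_image_of_injOn (hinjOn j (by omega)), card_range]
    have hidx : j + (d + 1) = (j + 1) + d := by omega
    by_cases haT : u j ∈ T
    · have hsub' : (range (j + 1)).image u ⊆ T := by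
        rw [range_add_one, image_insert]
        exact insert_subset haT hsub
      have := ih (j + 1) (by omega) T (by omega) hsub'
      rw [hidx]; exact this
    · -- pick `t ∈ T \ S`, preferring topic `h (u j)` if possible
      have hexists : ∃ t, t ∈ T ∧ t ∉ (range j).image u := by
        have hne : (range j).image u ≠ T := fun hEq => by rw [hEq] at hScard; omega
        obtain ⟨t, htT, htS⟩ := exists_of_ssubset (ssubset_of_subset_of_ne hsub hne)
        exact ⟨t, htT, htS⟩
      have hexists2 : ∃ t, t ∈ T ∧ t ∉ (range j).image u ∧
          (h t = h (u j) ∨ ∀ t' ∈ T, t' ∉ (range j).image u → h t' ≠ h (u j)) := by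
        by_cases hc : ∃ t, t ∈ T ∧ t ∉ (range j).image u ∧ h t = h (u j)
        · obtain ⟨t, h1, h2, h3⟩ := hc; exact ⟨t, h1, h2, Or.inl h3⟩
        · obtain ⟨t, h1, h2⟩ := hexists
          exact ⟨t, h1, h2, Or.inr fun t' ht1 ht2 ht3 => hc ⟨t', ht1, ht2, ht3⟩⟩
      obtain ⟨t, htT, htS, hcase⟩ := hexists2
      have hSA : (range j).image u ⊆ T.erase t := fun x hx =>
        mem_erase.mpr ⟨fun hxt => htS (hxt ▸ hx), hsub hx⟩
      have htA : t ∉ T.erase t := notMem_erase t T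
      have haA : u j ∉ T.erase t := fun hx => haT (mem_of_mem_erase hx)
      have hTA : T = insert t (T.erase t) := (insert_erase htT).symm
      have hAcard : (T.erase t).card = j + d := by
        rw [card_erase_of_mem htT]; omega
      -- the greedy step inequality, with the product expressed over the set `S`
      have hstept : (∑ m, φ m * (θ t m * ∏ s ∈ (range j).image u, (1 - θ s m)))
          ≤ ∑ m, φ m * (θ (u j) m * ∏ s ∈ (range j).image u, (1 - θ s m)) := by
        have e := hstep j hjL' t (fun i hi hit =>
          htS (mem_image.mpr ⟨i, mem_range.mpr hi, hit⟩))
        simpa only [prod_image (hinjF j (by omega))] using e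
      have hfac0 : ∀ (s : ι) (m : M), 0 ≤ 1 - θ s m := fun s m => by linarith [hθ1 s m]
      have hfac1 : ∀ (s : ι) (m : M), 1 - θ s m ≤ 1 := fun s m => by linarith [hθ0 s m]
      -- core inequality : the marginal of `t` w.r.t. `T.erase t` is at most that of `u j`
      have hcore : (∑ m, φ m * (θ t m * ∏ s ∈ T.erase t, (1 - θ s m)))
          ≤ ∑ m, φ m * (θ (u j) m * ∏ s ∈ T.erase t, (1 - θ s m)) := by
        rcases hcase with hmt | hnone
        · -- same topic: compare coefficients via the greedy step
          rw [delta_single φ θ h hθtopic t, delta_single φ θ h hθtopic (u j), hmt]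
          rw [delta_single φ θ h hθtopic t, delta_single φ θ h hθtopic (u j), hmt] at hstept
          set m0 := h (u j) with hm0
          set Q := ∏ s ∈ T.erase t, (1 - θ s m0) with hQ
          set P := ∏ s ∈ (range j).image u, (1 - θ s m0) with hP
          have hQ0 : 0 ≤ Q := prod_nonneg fun s _ => hfac0 s m0
          have hQP : Q ≤ P := prod_anti hSA _ (fun s => hfac0 s m0) (fun s => hfac1 s m0)
          rcases eq_or_lt_of_le hQ0 with hq | hq
          · rw [← hq]; simp
          · have hPpos : 0 < P := lt_of_lt_of_le hq hQP
            have hc : φ m0 * θ t m0 ≤ φ m0 * θ (u j) m0 := by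
              have h1 : (φ m0 * θ t m0) * P ≤ (φ m0 * θ (u j) m0) * P := by
                nlinarith [hstept]
              exact le_of_mul_le_mul_right h1 hPpos
            nlinarith [mul_le_mul_of_nonneg_right hc hQ0]
        · -- no item of `T` outside `S` lies in the topic of `u j`
          have h1 : (∑ m, φ m * (θ t m * ∏ s ∈ T.erase t, (1 - θ s m)))
              ≤ ∑ m, φ m * (θ t m * ∏ s ∈ (range j).image u, (1 - θ s m)) := by
            refine Finset.sum_le_sum fun m _ => ?_
            refine mul_le_mul_of_nonneg_left ?_ (hφ m)
            exact mul_le_mul_of_nonneg_left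
              (prod_anti hSA _ (fun s => hfac0 s m) (fun s => hfac1 s m)) (hθ0 t m)
          have h2 : (∑ m, φ m * (θ (u j) m * ∏ s ∈ (range j).image u, (1 - θ s m)))
              = ∑ m, φ m * (θ (u j) m * ∏ s ∈ T.erase t, (1 - θ s m)) := by
            rw [delta_single φ θ h hθtopic (u j), delta_single φ θ h hθtopic (u j)]
            have : (∏ s ∈ (range j).image u, (1 - θ s (h (u j))))
                = ∏ s ∈ T.erase t, (1 - θ s (h (u j))) := by
              refine prod_subset hSA fun x hxA hxS => ?_
              have hxT : x ∈ T := mem_of_mem_erase hxA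
              have hx : h x ≠ h (u j) := hnone x hxT hxS
              rw [hθtopic x (h (u j)) (Ne.symm hx)]; ring
            rw [this]
          calc (∑ m, φ m * (θ t m * ∏ s ∈ T.erase t, (1 - θ s m)))
              ≤ ∑ m, φ m * (θ t m * ∏ s ∈ (range j).image u, (1 - θ s m)) := h1
            _ ≤ ∑ m, φ m * (θ (u j) m * ∏ s ∈ (range j).image u, (1 - θ s m)) := hstept
            _ = ∑ m, φ m * (θ (u j) m * ∏ s ∈ T.erase t, (1 - θ s m)) := h2
      -- exchange `t` for `u j` and use the induction hypothesis
      have hswap : fval φ θ T ≤ fval φ θ (insert (u j) (T.erase t)) := by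
        have hT1 : fval φ θ T = fval φ θ (T.erase t)
            + ∑ m, φ m * (θ t m * ∏ s ∈ T.erase t, (1 - θ s m)) := by
          conv_lhs => rw [hTA]
          rw [fval_insert φ θ htA]
        rw [hT1, fval_insert φ θ haA]
        exact add_le_add_right hcore _
      have hsub' : (range (j + 1)).image u ⊆ insert (u j) (T.erase t) := by
        rw [range_add_one, image_insert]
        exact insert_subset_insert _ hSA
      have hcard' : (insert (u j) (T.erase t)).card = (j + 1) + d := by
        rw [card_insert_of_notMem haA, hAcard]; omega
      have := ih (j + 1) (by omega) (insert (u j) (T.erase t)) hcard' hsub'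
      rw [hidx]
      exact le_trans hswap this

end GreedyAux

open GreedyAux in
/-- Proposition 2.1: under the topic structure assumption, the greedy
procedure produces, after each number l ≤ L of steps, a list of length l of maximal
expected reward among all lists of l distinct items. -/
theorem greedy_is_optimal {M ι : Type*} [Fintype M] [Fintype ι] [DecidableEq ι]
    (φ : M → ℝ) (θ : ι → M → ℝ) (h : ι → M)
    (hθtopic : ∀ a m, m ≠ h a → θ a m = 0)
    (hφ : ∀ m, 0 ≤ φ m) (hθ0 : ∀ a m, 0 ≤ θ a m) (hθ1 : ∀ a m, θ a m ≤ 1)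
    (hdistinct : ∀ a b : ι, a ≠ b → h a = h b → θ a (h a) ≠ θ b (h b))
    (L : ℕ) (hL : L ≤ Fintype.card ι)
    (u : ℕ → ι) (hinj : Set.InjOn u (Set.Iio L))
    (hfirst : ∀ k : ι, (∑ m, φ m * θ k m) ≤ ∑ m, φ m * θ (u 0) m)
    (hstep : ∀ l, l + 1 ≤ L → ∀ k : ι, (∀ i < l, u i ≠ k) →
      (∑ m, φ m * (θ k m * ∏ s ∈ range l, (1 - θ (u s) m)))
        ≤ ∑ m, φ m * (θ (u l) m * ∏ s ∈ range l, (1 - θ (u s) m))) :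
    ∀ l ≤ L, ∀ v : Fin l → ι, Function.Injective v →
      (∑ m, φ m * ∑ i, θ (v i) m * ∏ s ∈ Finset.Iio i, (1 - θ (v s) m))
        ≤ ∑ m, φ m * ∑ i ∈ range l, θ (u i) m * ∏ s ∈ range i, (1 - θ (u s) m) := by
  intro l hl v hv
  rcases Nat.eq_zero_or_pos l with rfl | hl0
  · simp
  -- extend `v` to a function on `ℕ`
  set w : ℕ → ι := fun j => v ⟨j % l, Nat.mod_lt j hl0⟩ with hwdef
  have hw : ∀ i : Fin l, w i.val = v i := by
    intro i
    simp only [hwdef]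
    congr 1
    exact Fin.ext (Nat.mod_eq_of_lt i.isLt)
  have hwinj : ∀ x ∈ range l, ∀ y ∈ range l, w x = w y → x = y := by
    intro x hx y hy hxy
    have hx' := mem_range.mp hx
    have hy' := mem_range.mp hy
    have := hv (show v ⟨x % l, _⟩ = v ⟨y % l, _⟩ from hxy)
    have hmod : x % l = y % l := congrArg Fin.val this
    rwa [Nat.mod_eq_of_lt hx', Nat.mod_eq_of_lt hy'] at hmod
  have hinjF : ∀ x ∈ range l, ∀ y ∈ range l, u x = u y → x = y := by
    intro x hx y hy hxy
    exact hinj (show x ∈ Set.Iio L from lt_of_lt_of_le (mem_range.mp hx) hl)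
      (show y ∈ Set.Iio L from lt_of_lt_of_le (mem_range.mp hy) hl) hxy
  -- rewrite the left-hand side as `fval` of the image of `v`
  have key : ∀ m, (∑ i : Fin l, θ (v i) m * ∏ s ∈ Finset.Iio i, (1 - θ (v s) m))
      = ∑ j ∈ range l, θ (w j) m * ∏ s ∈ range j, (1 - θ (w s) m) := by
    intro m
    rw [← Fin.sum_univ_eq_sum_range]
    refine Finset.sum_congr rfl fun i _ => ?_
    rw [← hw i]
    congr 1
    rw [← Nat.Iio_eq_range, ← Fin.map_valEmbedding_Iio, prod_map]
    exact Finset.prod_congr rfl fun s _ => by rw [Fin.valEmbedding_apply, hw s]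
  have hLHS : (∑ m, φ m * ∑ i : Fin l, θ (v i) m * ∏ s ∈ Finset.Iio i, (1 - θ (v s) m))
      = fval φ θ ((range l).image w) := by
    unfold fval
    refine Finset.sum_congr rfl fun m _ => ?_
    rw [key m, telescope l (fun j => θ (w j) m), prod_image hwinj]
  have hRHS : (∑ m, φ m * ∑ i ∈ range l, θ (u i) m * ∏ s ∈ range i, (1 - θ (u s) m))
      = fval φ θ ((range l).image u) := by
    unfold fval
    refine Finset.sum_congr rfl fun m _ => ?_
    rw [telescope l (fun j => θ (u j) m), prod_image hinjF]
  have hcardT : ((range l).image w).card = l := by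
    rw [card_image_of_injOn, card_range]
    intro x hx y hy hxy
    exact hwinj x (mem_coe.mp hx) y (mem_coe.mp hy) hxy
  have hmain := main φ θ h hθtopic hφ hθ0 hθ1 L u hinj hstep l 0 (by omega)
    ((range l).image w) (by omega) (by simp)
  rw [Nat.zero_add] at hmain
  rw [hLHS, hRHS]
  exact hmain
end

section
/- Under the topic-structure assumption, any optimal list u* of length L satisfies: for each topic m, the items of topic m appearing in u* are exactly the |u* ∩ N_m| items of topic m with the highest click-through rates θ_{k,m} (assuming all θ_{k,m} for k of topic m are distinct). That is, within each topic, the optimal list uses the best items of that topic. -/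
open Finset

private lemma sum_telescope_nat (g : ℕ → ℝ) (n : ℕ) :
    ∑ l ∈ Finset.range n, g l * ∏ i ∈ Finset.range l, (1 - g i)
      = 1 - ∏ i ∈ Finset.range n, (1 - g i) := by
  induction n with
  | zero => simp
  | succ n ih => rw [Finset.sum_range_succ, Finset.prod_range_succ, ih]; ring

private lemma sum_telescope_fin {n : ℕ} (f : Fin n → ℝ) :
    ∑ l, f l * ∏ i ∈ Finset.Iio l, (1 - f i) = 1 - ∏ i, (1 - f i) := by
  classical
  set g : ℕ → ℝ := fun i => if h : i < n then f ⟨i, h⟩ else 0 with hg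
  have hfg : ∀ i : Fin n, f i = g i.val := by
    intro i; simp [hg, i.isLt]
  have hIio : ∀ l : Fin n, ∏ i ∈ Finset.Iio l, (1 - f i)
      = ∏ i ∈ Finset.range l.val, (1 - g i) := by
    intro l
    rw [← Nat.Iio_eq_range, ← Fin.map_valEmbedding_Iio, Finset.prod_map]
    exact Finset.prod_congr rfl fun i _ => by rw [hfg]; rfl
  calc ∑ l, f l * ∏ i ∈ Finset.Iio l, (1 - f i)
      = ∑ l : Fin n, g l.val * ∏ i ∈ Finset.range l.val, (1 - g i) := by
        exact Finset.sum_congr rfl fun l _ => by rw [hfg, hIio]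
    _ = ∑ l ∈ Finset.range n, g l * ∏ i ∈ Finset.range l, (1 - g i) :=
        (Fin.sum_univ_eq_sum_range (fun l => g l * ∏ i ∈ Finset.range l, (1 - g i)) n)
    _ = 1 - ∏ i ∈ Finset.range n, (1 - g i) := sum_telescope_nat g n
    _ = 1 - ∏ i : Fin n, (1 - f i) := by
        rw [← Fin.prod_univ_eq_prod_range (fun i => (1 - g i)) n]
        congr 1
        exact Finset.prod_congr rfl fun i _ => by rw [hfg]

/-- any optimal list uses, within each topic, the items of that topic
with the highest click-through rates: every item of a given topic outside the
optimal list has a strictly smaller CTR than every item of that topic inside it. -/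
theorem optimal_list_uses_best_items_per_topic {M ι : Type*} [Fintype M] [Fintype ι]
    (φ : M → ℝ) (θ : ι → M → ℝ) (h : ι → M)
    (hθtopic : ∀ a m, m ≠ h a → θ a m = 0)
    (hφ : ∀ m, 0 < φ m) (hθ0 : ∀ a m, 0 ≤ θ a m) (hθ1 : ∀ a m, θ a m < 1)
    (hdistinct : ∀ a b : ι, a ≠ b → h a = h b → θ a (h a) ≠ θ b (h b))
    (L : ℕ) (ustar : Fin L → ι) (hinj : Function.Injective ustar)
    (hopt : ∀ v : Fin L → ι, Function.Injective v →
      (∑ m, φ m * ∑ l, θ (v l) m * ∏ i ∈ Finset.Iio l, (1 - θ (v i) m))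
        ≤ ∑ m, φ m * ∑ l, θ (ustar l) m * ∏ i ∈ Finset.Iio l, (1 - θ (ustar i) m)) :
    ∀ i : Fin L, ∀ k' : ι, (∀ j : Fin L, ustar j ≠ k') → h k' = h (ustar i) →
      θ k' (h k') < θ (ustar i) (h (ustar i)) := by
  classical
  intro i k' hk' hhk
  set m0 := h (ustar i) with hm0
  set v : Fin L → ι := Function.update ustar i k' with hv
  have hvval : ∀ l : Fin L, l ≠ i → v l = ustar l := fun l hl =>
    Function.update_of_ne hl _ _
  have hvi : v i = k' := Function.update_self _ _ _
  have hvinj : Function.Injective v := by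
    intro a b hab
    by_cases ha : a = i <;> by_cases hb : b = i
    · rw [ha, hb]
    · rw [ha, hvi, hvval b hb] at hab; exact absurd hab.symm (hk' b)
    · rw [hb, hvi, hvval a ha] at hab; exact absurd hab (hk' a)
    · rw [hvval a ha, hvval b hb] at hab; exact hinj hab
  have key := hopt v hvinj
  have rw1 : ∀ (w : Fin L → ι) (m : M),
      ∑ l, θ (w l) m * ∏ i ∈ Finset.Iio l, (1 - θ (w i) m)
        = 1 - ∏ l, (1 - θ (w l) m) := fun w m =>
    sum_telescope_fin (fun l => θ (w l) m)
  simp only [rw1] at key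
  have key2 : ∑ m, φ m * ∏ l, (1 - θ (ustar l) m)
      ≤ ∑ m, φ m * ∏ l, (1 - θ (v l) m) := by
    have h1 : ∑ m, φ m * (1 - ∏ l, (1 - θ (v l) m))
        = ∑ m, φ m - ∑ m, φ m * ∏ l, (1 - θ (v l) m) := by
      rw [← Finset.sum_sub_distrib]; exact Finset.sum_congr rfl fun m _ => by ring
    have h2 : ∑ m, φ m * (1 - ∏ l, (1 - θ (ustar l) m))
        = ∑ m, φ m - ∑ m, φ m * ∏ l, (1 - θ (ustar l) m) := by
      rw [← Finset.sum_sub_distrib]; exact Finset.sum_congr rfl fun m _ => by ring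
    rw [h1, h2] at key
    linarith
  have heq : ∀ m ∈ Finset.univ.erase m0,
      φ m * ∏ l, (1 - θ (v l) m) = φ m * ∏ l, (1 - θ (ustar l) m) := by
    intro m hm
    have hmne : m ≠ m0 := Finset.ne_of_mem_erase hm
    congr 1
    refine Finset.prod_congr rfl fun l _ => ?_
    by_cases hl : l = i
    · subst hl
      rw [hvi, hθtopic k' m (by rw [hhk]; exact hmne), hθtopic (ustar l) m hmne]
    · rw [hvval l hl]
  have h3 : φ m0 * ∏ l, (1 - θ (ustar l) m0) ≤ φ m0 * ∏ l, (1 - θ (v l) m0) := by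
    rw [← Finset.add_sum_erase _ _ (Finset.mem_univ m0),
        ← Finset.add_sum_erase _ _ (Finset.mem_univ m0)] at key2
    rw [Finset.sum_congr rfl heq] at key2
    linarith
  have h4 : ∏ l, (1 - θ (ustar l) m0) ≤ ∏ l, (1 - θ (v l) m0) :=
    (mul_le_mul_iff_right₀ (hφ m0)).mp h3
  rw [← Finset.mul_prod_erase _ _ (Finset.mem_univ i),
      ← Finset.mul_prod_erase _ _ (Finset.mem_univ i)] at h4
  have hpeq : ∏ l ∈ Finset.univ.erase i, (1 - θ (v l) m0)
      = ∏ l ∈ Finset.univ.erase i, (1 - θ (ustar l) m0) :=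
    Finset.prod_congr rfl fun l hl => by rw [hvval l (Finset.ne_of_mem_erase hl)]
  have hppos : 0 < ∏ l ∈ Finset.univ.erase i, (1 - θ (ustar l) m0) :=
    Finset.prod_pos fun l _ => by linarith [hθ1 (ustar l) m0]
  rw [hpeq, hvi] at h4
  have h5 : θ k' m0 ≤ θ (ustar i) m0 := by
    have := (mul_le_mul_iff_left₀ hppos).mp h4
    linarith
  have hne : θ k' (h k') ≠ θ (ustar i) (h (ustar i)) :=
    hdistinct k' (ustar i) (fun he => (hk' i) he.symm) hhk
  rw [hhk]
  rw [hhk, ← hm0] at hne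
  exact lt_of_le_of_ne h5 hne
end

section
/- In a greedily constructed optimal list u* (where each slot's item maximizes the success rate at that slot given the previously placed items), the success rates are nonincreasing along the list: for all j ≤ l ≤ L, ν(j | u*) ≥ ν(l | u*). -/
open Finset

/-- The paper's `ν(l | u)` with item `k` in slot `l` behind the prefix `u 0, …, u (l - 1)`. -/
def successRate {M ι : Type*} [Fintype M] (φ : M → ℝ) (θ : ι → M → ℝ) (u : ℕ → ι)
    (k : ι) (l : ℕ) : ℝ :=
  ∑ m, φ m * (θ k m * ∏ s ∈ range l, (1 - θ (u s) m))

theorem antitone_prod_range_of_le_one {f : ℕ → ℝ} (hf0 : ∀ s, 0 ≤ f s) (hf1 : ∀ s, f s ≤ 1) :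
    Antitone fun n ↦ ∏ s ∈ range n, f s :=
  (prod_anti_set_of_le_one hf0 hf1).comp_monotone range_mono

theorem successRate_antitone {M ι : Type*} [Fintype M] {φ : M → ℝ} {θ : ι → M → ℝ}
    (hφ : ∀ m, 0 ≤ φ m) (hθ0 : ∀ a m, 0 ≤ θ a m) (hθ1 : ∀ a m, θ a m ≤ 1)
    (u : ℕ → ι) (k : ι) : Antitone (successRate φ θ u k) := fun j l hjl ↦ by
  refine sum_le_sum fun m _ ↦ mul_le_mul_of_nonneg_left ?_ (hφ m)
  refine mul_le_mul_of_nonneg_left ?_ (hθ0 k m)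
  exact antitone_prod_range_of_le_one (fun s ↦ sub_nonneg.2 (hθ1 (u s) m))
    (fun s ↦ sub_le_self 1 (hθ0 (u s) m)) hjl

theorem greedy_success_rates_nonincreasing_general {M ι : Type*} [Fintype M]
    (φ : M → ℝ) (θ : ι → M → ℝ)
    (hφ : ∀ m, 0 ≤ φ m) (hθ0 : ∀ a m, 0 ≤ θ a m) (hθ1 : ∀ a m, θ a m ≤ 1)
    (L : ℕ) (u : ℕ → ι)
    (hgreedy : ∀ l < L, ∀ k : ι,
      (∑ m, φ m * (θ k m * ∏ s ∈ range l, (1 - θ (u s) m)))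
        ≤ ∑ m, φ m * (θ (u l) m * ∏ s ∈ range l, (1 - θ (u s) m))) :
    ∀ j l : ℕ, j ≤ l → l < L →
      (∑ m, φ m * (θ (u l) m * ∏ s ∈ range l, (1 - θ (u s) m)))
        ≤ ∑ m, φ m * (θ (u j) m * ∏ s ∈ range j, (1 - θ (u s) m)) := by
  intro j l hjl hlL
  -- Moving `u l` forward to slot `j` only shortens the prefix; greedy choice at `j` beats it.
  calc successRate φ θ u (u l) l
      ≤ successRate φ θ u (u l) j := successRate_antitone hφ hθ0 hθ1 u (u l) hjl
    _ ≤ successRate φ θ u (u j) j := hgreedy j (hjl.trans_lt hlL) (u l)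

/-- eq:auxineq: in a greedily constructed list, the success rates
are nonincreasing along the slots. -/
theorem greedy_success_rates_nonincreasing {M ι : Type*} [Fintype M]
    (φ : M → ℝ) (θ : ι → M → ℝ) (h : ι → M)
    (hθtopic : ∀ a m, m ≠ h a → θ a m = 0)
    (hφ : ∀ m, 0 ≤ φ m) (hθ0 : ∀ a m, 0 ≤ θ a m) (hθ1 : ∀ a m, θ a m ≤ 1)
    (L : ℕ) (u : ℕ → ι)
    (hgreedy : ∀ l < L, ∀ k : ι,
      (∑ m, φ m * (θ k m * ∏ s ∈ range l, (1 - θ (u s) m)))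
        ≤ ∑ m, φ m * (θ (u l) m * ∏ s ∈ range l, (1 - θ (u s) m))) :
    ∀ j l : ℕ, j ≤ l → l < L →
      (∑ m, φ m * (θ (u l) m * ∏ s ∈ range l, (1 - θ (u s) m)))
        ≤ ∑ m, φ m * (θ (u j) m * ∏ s ∈ range j, (1 - θ (u s) m)) :=
  greedy_success_rates_nonincreasing_general φ θ hφ hθ0 hθ1 L u hgreedy
end
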